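/- arXiv:2311.01053 — 2 statements merged into one kernel-verified Lean document; each statement's English description precedes it below -/
import Mathlib

section
/- Let b ≠ 0 and z₀ be real constants, let (u_t)_{t≥1} be an i.i.d. sequence of real random variables with E[u₁] = 0 and Var(u₁) < ∞, and let (x_t)_{t≥1} be a sequence of real random variables with x_t / t → 0 almost surely as t → ∞. Set z_t = z₀ + b·t + x_t and assume z_t ≠ 0 almost surely for every t. Then for every γ > 0 the sequence T^{-γ} · Σ_{t=1}^{T} u_t / z_t converges to 0 in probability as T → ∞. Equivalently, writing α̂₁ = T^{-1} Σ_{t=1}^{T} y_t / z_t for the ratio-based estimator in the model y_t = α z_t + u_t, one has T^{1-γ}(α̂₁ − α) → 0 in probability. -/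
/-!
Fix an outcome outside a null set. The strong law of large numbers for `|u t|` bounds
`∑_{t ≤ T} |u t|` by `C T`, and `z t / t → b ≠ 0` makes `1 / z t = O(1 / t)`. Abel summation
against the decreasing weights `1 / t` turns the first bound into `∑_{t ≤ T} |u t| / t ≤ C (1 + log T)`,
so `∑_{t ≤ T} u t / z t = O(1 + log T) = o(T ^ γ)`. Almost sure convergence then gives
convergence in probability.
-/

open MeasureTheory ProbabilityTheory Filter
open scoped Topology

open Asymptotics Finset Real

theorem sum_range_mul_le_sum_range_mul_of_antitone {R : Type*} [CommRing R] [LinearOrder R]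
    [IsStrictOrderedRing R] {a b w : ℕ → R}
    (hab : ∀ n, ∑ i ∈ range n, a i ≤ ∑ i ∈ range n, b i) (hw : Antitone w) (hw₀ : ∀ n, 0 ≤ w n)
    (n : ℕ) : ∑ i ∈ range n, a i * w i ≤ ∑ i ∈ range n, b i * w i := by
  -- Abel summation as an induction: lowering the weight `w n` to `w (n + 1)` can only decrease
  -- the left side, since the partial sums of `b - a` are nonnegative.
  have hpartial : ∀ n, (∑ i ∈ range n, (b i - a i)) * w n ≤ ∑ i ∈ range n, (b i - a i) * w i := by
    intro n
    induction n with
    | zero => simp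
    | succ n ih =>
      have hD : 0 ≤ ∑ i ∈ range (n + 1), (b i - a i) := by
        simpa [sum_sub_distrib] using hab (n + 1)
      calc (∑ i ∈ range (n + 1), (b i - a i)) * w (n + 1)
          ≤ (∑ i ∈ range (n + 1), (b i - a i)) * w n :=
            mul_le_mul_of_nonneg_left (hw n.le_succ) hD
        _ ≤ ∑ i ∈ range (n + 1), (b i - a i) * w i := by
            rw [sum_range_succ, sum_range_succ, add_mul]
            linarith
  have h₀ : 0 ≤ (∑ i ∈ range n, (b i - a i)) * w n :=
    mul_nonneg (by simpa [sum_sub_distrib] using hab n) (hw₀ n)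
  have := h₀.trans (hpartial n)
  simp only [sub_mul, sum_sub_distrib] at this
  linarith

theorem sum_range_div_succ_le_mul_one_add_log {a : ℕ → ℝ} {C : ℝ} (hC : 0 ≤ C)
    (ha : ∀ n : ℕ, ∑ i ∈ range n, a i ≤ C * n) (n : ℕ) :
    ∑ i ∈ range n, a i / (i + 1) ≤ C * (1 + log n) := by
  have hanti : Antitone fun i : ℕ => ((i : ℝ) + 1)⁻¹ := fun i j hij =>
    inv_anti₀ (by positivity) (by gcongr)
  calc ∑ i ∈ range n, a i / (i + 1)
      ≤ ∑ i ∈ range n, C * ((i : ℝ) + 1)⁻¹ :=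
        sum_range_mul_le_sum_range_mul_of_antitone (fun n => by simpa [mul_comm] using ha n)
          hanti (fun i => by positivity) n
    _ = C * harmonic n := by simp [harmonic, mul_sum]
    _ ≤ C * (1 + log n) := mul_le_mul_of_nonneg_left (harmonic_le_one_add_log n) hC

theorem exists_sum_range_le_mul_of_tendsto_div {a : ℕ → ℝ} {m : ℝ}
    (h : Tendsto (fun n : ℕ => (∑ i ∈ range n, a i) / n) atTop (𝓝 m)) :
    ∃ C, 0 ≤ C ∧ ∀ n : ℕ, ∑ i ∈ range n, a i ≤ C * n := by
  obtain ⟨C, hC⟩ := h.bddAbove_range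
  refine ⟨max C 0, le_max_right _ _, fun n => ?_⟩
  rcases n.eq_zero_or_pos with rfl | hn
  · simp
  rw [← div_le_iff₀ (by positivity)]
  exact (hC ⟨n, rfl⟩).trans (le_max_left _ _)

theorem Asymptotics.IsBigO.sum_range_one_add {E : Type*} [SeminormedAddCommGroup E]
    {f : ℕ → E} {g : ℕ → ℝ} (h : f =O[atTop] g) (hg : 0 ≤ g) :
    (fun n => ∑ i ∈ range n, f i) =O[atTop] fun n => 1 + ∑ i ∈ range n, g i := by
  obtain ⟨c, hc, hfg⟩ := h.exists_pos
  obtain ⟨N, hN⟩ := eventually_atTop.1 hfg.bound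
  set K := ‖∑ i ∈ range N, f i‖
  refine IsBigO.of_bound (max K c) ?_
  filter_upwards [eventually_ge_atTop N] with n hn
  have hG : 0 ≤ ∑ i ∈ range n, g i := sum_nonneg fun i _ => hg i
  have htail : ‖∑ i ∈ Ico N n, f i‖ ≤ c * ∑ i ∈ range n, g i := by
    calc ‖∑ i ∈ Ico N n, f i‖ ≤ ∑ i ∈ Ico N n, c * g i :=
          norm_sum_le_of_le _ fun i hi => by
            simpa [abs_of_nonneg (hg i)] using hN i (mem_Ico.1 hi).1
      _ ≤ c * ∑ i ∈ range n, g i := by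
          rw [← mul_sum]
          gcongr
          · exact fun i _ _ => hg i
          · exact fun i hi => mem_range.2 (mem_Ico.1 hi).2
  rw [← sum_range_add_sum_Ico _ hn, Real.norm_of_nonneg (by positivity)]
  calc ‖∑ i ∈ range N, f i + ∑ i ∈ Ico N n, f i‖ ≤ K + c * ∑ i ∈ range n, g i :=
        (norm_add_le _ _).trans (add_le_add le_rfl htail)
    _ ≤ max K c * (1 + ∑ i ∈ range n, g i) := by
        nlinarith [le_max_left K c, le_max_right K c]

theorem isLittleO_one_add_log_rpow_atTop {γ : ℝ} (hγ : 0 < γ) (C : ℝ) :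
    (fun x : ℝ => 1 + C * (1 + log x)) =o[atTop] fun x => x ^ γ := by
  have hconst : (fun _ : ℝ => (1 : ℝ)) =o[atTop] fun x => x ^ γ :=
    isLittleO_one_left_iff ℝ |>.2 <| tendsto_norm_atTop_atTop.comp (tendsto_rpow_atTop hγ)
  exact hconst.add ((hconst.add (isLittleO_log_rpow_atTop hγ)).const_mul_left C)

theorem tendsto_add_mul_add_div_natCast {x : ℕ → ℝ} (z₀ b : ℝ)
    (hx : Tendsto (fun t : ℕ => x t / t) atTop (𝓝 0)) :
    Tendsto (fun t : ℕ => (z₀ + b * t + x t) / t) atTop (𝓝 b) := by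
  have h := ((tendsto_const_div_atTop_nhds_zero_nat z₀).add_const b).add hx
  rw [zero_add, add_zero] at h
  refine h.congr' ?_
  filter_upwards [eventually_ne_atTop 0] with t ht
  field_simp

theorem tendsto_rpow_neg_mul_sum_Icc_div {u z : ℕ → ℝ} {b m γ : ℝ} (hb : b ≠ 0)
    (hz : Tendsto (fun t : ℕ => z t / t) atTop (𝓝 b))
    (hu : Tendsto (fun n : ℕ => (∑ i ∈ range n, |u (i + 1)|) / n) atTop (𝓝 m)) (hγ : 0 < γ) :
    Tendsto (fun T : ℕ => (T : ℝ) ^ (-γ) * ∑ t ∈ Icc 1 T, u t / z t) atTop (𝓝 0) := by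
  obtain ⟨C, hC, hCu⟩ := exists_sum_range_le_mul_of_tendsto_div hu
  have hz_inv : (fun t : ℕ => (z (t + 1))⁻¹) =O[atTop] fun t : ℕ => ((t : ℝ) + 1)⁻¹ := by
    refine isBigO_of_div_tendsto_nhds_of_ne_zero ?_ hb
    refine (hz.comp (tendsto_add_atTop_nat 1)).congr fun t => ?_
    simp [div_eq_mul_inv, mul_comm]
  have hterm : (fun t : ℕ => u (t + 1) / z (t + 1)) =O[atTop]
      fun t : ℕ => |u (t + 1)| / ((t : ℝ) + 1) := by
    simpa only [div_eq_mul_inv, Real.norm_eq_abs] using (isBigO_refl _ _).norm_right.mul hz_inv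
  have hsum : (fun T : ℕ => ∑ t ∈ range T, u (t + 1) / z (t + 1)) =o[atTop]
      fun T : ℕ => (T : ℝ) ^ γ := by
    refine (hterm.sum_range_one_add fun t => by positivity).trans_isLittleO ?_
    refine (isBigO_of_le _ fun T => ?_).trans_isLittleO
      ((isLittleO_one_add_log_rpow_atTop hγ C).comp_tendsto tendsto_natCast_atTop_atTop)
    rw [Function.comp_apply, Real.norm_of_nonneg (by positivity),
      Real.norm_of_nonneg (by positivity)]
    linarith [sum_range_div_succ_le_mul_one_add_log hC hCu T]
  refine hsum.tendsto_div_nhds_zero.congr fun T => ?_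
  rw [rpow_neg (Nat.cast_nonneg T), ← div_eq_inv_mul, ← Ico_add_one_right_eq_Icc,
    sum_Ico_eq_sum_range]
  simp [add_comm]

theorem ratio_estimator_superconsistent_general
    {Ω : Type*} [MeasurableSpace Ω] (P : Measure Ω) [IsProbabilityMeasure P]
    (b z₀ : ℝ) (hb : b ≠ 0)
    (u x : ℕ → Ω → ℝ)
    (hx_meas : ∀ t, Measurable (x t))
    (hu_indep : iIndepFun u P)
    (hu_ident : ∀ t, IdentDistrib (u t) (u 1) P P)
    (hu_int : Integrable (u 1) P)
    (z : ℕ → Ω → ℝ) (hz : ∀ t ω, z t ω = z₀ + b * t + x t ω)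
    (hx_lln : ∀ᵐ ω ∂P, Tendsto (fun t : ℕ => x t ω / t) atTop (𝓝 0)) :
    ∀ γ : ℝ, 0 < γ →
      TendstoInMeasure P
        (fun (T : ℕ) ω => (T : ℝ) ^ (-γ) * ∑ t ∈ Finset.Icc 1 T, u t ω / z t ω)
        atTop (fun _ => 0) := by
  intro γ hγ
  obtain rfl : z = fun t ω => z₀ + b * t + x t ω := funext₂ hz
  have hslln := strong_law_ae_real (fun i ω => |u (i + 1) ω|) hu_int.abs
    (fun i j hij => (hu_indep.indepFun (by simpa using hij)).comp measurable_abs measurable_abs)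
    (fun i => ((hu_ident (i + 1)).trans (hu_ident (0 + 1)).symm).comp measurable_abs)
  refine tendstoInMeasure_of_tendsto_ae (fun T => ?_) ?_
  · have hu_meas : ∀ t, AEMeasurable (u t) P := fun t => (hu_ident t).aemeasurable_fst
    exact AEMeasurable.aestronglyMeasurable (by fun_prop)
  · filter_upwards [hx_lln, hslln] with ω hx hu
    exact tendsto_rpow_neg_mul_sum_Icc_div hb (tendsto_add_mul_add_div_natCast z₀ b hx) hu hγ

/-- Superconsistency of the ratio-based estimator: in the cointegrated model
`y t = α * z t + u t` with `z t = z₀ + b * t + x t`, `b ≠ 0`, `(u t)` i.i.d. with mean zero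
and finite variance, and `x t / t → 0` almost surely, for every `γ > 0` the quantity
`T ^ (1 - γ) * (α̂₁ - α) = T ^ (-γ) * ∑_{t=1}^T u t / z t` tends to `0` in probability. -/
theorem ratio_estimator_superconsistent
    {Ω : Type*} [MeasurableSpace Ω] (P : Measure Ω) [IsProbabilityMeasure P]
    (b z₀ : ℝ) (hb : b ≠ 0)
    (u x : ℕ → Ω → ℝ)
    (hu_meas : ∀ t, Measurable (u t)) (hx_meas : ∀ t, Measurable (x t))
    (hu_indep : iIndepFun u P)
    (hu_ident : ∀ t, IdentDistrib (u t) (u 1) P P)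
    (hu_int : Integrable (u 1) P)
    (hu_mean : ∫ ω, u 1 ω ∂P = 0)
    (hu_var : evariance (u 1) P < ⊤)
    (z : ℕ → Ω → ℝ) (hz : ∀ t ω, z t ω = z₀ + b * t + x t ω)
    (hx_lln : ∀ᵐ ω ∂P, Tendsto (fun t : ℕ => x t ω / t) atTop (𝓝 0))
    (hz_ne : ∀ t, ∀ᵐ ω ∂P, z t ω ≠ 0) :
    ∀ γ : ℝ, 0 < γ →
      TendstoInMeasure P
        (fun (T : ℕ) ω => (T : ℝ) ^ (-γ) * ∑ t ∈ Finset.Icc 1 T, u t ω / z t ω)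
        atTop (fun _ => 0) :=
  ratio_estimator_superconsistent_general P b z₀ hb u x hx_meas hu_indep hu_ident hu_int z hz hx_lln
end

section
/- Let α, z₀ be real constants and b ≠ 0, set z_t = z₀ + b·t for integers t ≥ 1, let σ² > 0, let (u_t)_{t≥1} be i.i.d. with u_t ~ N(0, σ²), and set y_t = α z_t + u_t. Then the regression-based estimator α̂₂ = (Σ_{t=1}^{T} z_t²)^{-1} Σ_{t=1}^{T} z_t y_t (defined for T large enough that Σ_{t=1}^{T} z_t² > 0) satisfies T^{3/2} (α̂₂ − α) → N(0, 3σ²/b²) in distribution as T → ∞. In particular, in the case of a deterministic linear emissions trend with Gaussian errors, the regression-based estimator converges to α at the rate T^{3/2} with a Gaussian limiting distribution. -/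
/-!
The estimation error is linear in the Gaussian noise, `α̂₂ - α = (∑ z_t u_t) / ∑ z_t²`, so by
independence `T^{3/2} (α̂₂ - α)` is exactly `N(0, T³ σ² / ∑ z_t²)` for every large `T`.
Since `∑_{t ≤ T} (z₀ + b t)² ∼ b² T³ / 3`, these variances converge to `3σ²/b²`, and Gaussian laws
depend continuously on their parameters: writing `N(m, w)` as the image of `N(0, 1)` under
`x ↦ m + √w x`, dominated convergence gives convergence of the integrals of bounded continuous
functions.
-/

open MeasureTheory ProbabilityTheory Filter
open scoped NNReal Topology BoundedContinuousFunction

lemma map_sum_eq_gaussianReal {ι Ω : Type*} [MeasurableSpace Ω] {P : Measure Ω}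
    [IsProbabilityMeasure P] {X : ι → Ω → ℝ} (hindep : iIndepFun X P) {m : ι → ℝ} {w : ι → ℝ≥0}
    (hlaw : ∀ i, P.map (X i) = gaussianReal (m i) (w i)) (s : Finset ι) :
    P.map (∑ i ∈ s, X i) = gaussianReal (∑ i ∈ s, m i) (∑ i ∈ s, w i) := by
  classical
  have hX i : AEMeasurable (X i) P := .of_map_ne_zero (by simp [hlaw, NeZero.ne])
  induction s using Finset.induction_on with
  | empty => simp [gaussianReal_zero_var, Pi.zero_def, Measure.map_const]
  | insert i s hi ih =>
    rw [Finset.sum_insert hi, Finset.sum_insert hi, Finset.sum_insert hi, add_comm, add_comm (m i),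
      add_comm (w i)]
    exact gaussianReal_add_gaussianReal_of_indepFun
      (hindep.indepFun_finsetSum_of_notMem₀ hX hi) ih (hlaw i)

lemma map_sum_mul_eq_gaussianReal {ι Ω : Type*} [MeasurableSpace Ω] {P : Measure Ω}
    [IsProbabilityMeasure P] {X : ι → Ω → ℝ} (hindep : iIndepFun X P) {m : ι → ℝ} {w : ι → ℝ≥0}
    (hlaw : ∀ i, P.map (X i) = gaussianReal (m i) (w i)) (a : ι → ℝ) (s : Finset ι) :
    P.map (fun ω ↦ ∑ i ∈ s, a i * X i ω) =
      gaussianReal (∑ i ∈ s, a i * m i) (∑ i ∈ s, .mk (a i ^ 2) (sq_nonneg _) * w i) := by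
  have hX i : AEMeasurable (X i) P := .of_map_ne_zero (by simp [hlaw, NeZero.ne])
  have hlaw' i : P.map (fun ω ↦ a i * X i ω) =
      gaussianReal (a i * m i) (.mk (a i ^ 2) (sq_nonneg _) * w i) := by
    rw [← gaussianReal_map_const_mul, ← hlaw,
      AEMeasurable.map_map_of_aemeasurable (by fun_prop) (hX i)]
    rfl
  convert map_sum_eq_gaussianReal
    (hindep.comp₀ (fun i x ↦ a i * x) hX fun _ ↦ by fun_prop) hlaw' s
  simp [Finset.sum_apply]

lemma gaussianReal_eq_map_const_add_mul (m : ℝ) (w : ℝ≥0) :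
    gaussianReal m w = (gaussianReal 0 1).map (fun x ↦ m + √w * x) := by
  have hcomp : (fun x ↦ m + √w * x) = (m + ·) ∘ (√w * ·) := rfl
  rw [hcomp, ← Measure.map_map (by fun_prop) (by fun_prop), gaussianReal_map_const_mul,
    gaussianReal_map_const_add]
  congr 1
  · simp
  · ext; simp

lemma tendsto_integral_gaussianReal {ι : Type*} {l : Filter ι} [l.IsCountablyGenerated]
    {m : ι → ℝ} {w : ι → ℝ≥0} {m₀ : ℝ} {w₀ : ℝ≥0} (hm : Tendsto m l (𝓝 m₀))
    (hw : Tendsto w l (𝓝 w₀)) (f : ℝ →ᵇ ℝ) :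
    Tendsto (fun i ↦ ∫ x, f x ∂gaussianReal (m i) (w i)) l
      (𝓝 (∫ x, f x ∂gaussianReal m₀ w₀)) := by
  have hstd (m : ℝ) (w : ℝ≥0) :
      ∫ x, f x ∂gaussianReal m w = ∫ x, f (m + √w * x) ∂gaussianReal 0 1 := by
    rw [gaussianReal_eq_map_const_add_mul, integral_map (by fun_prop)
      f.continuous.aestronglyMeasurable]
  simp only [hstd]
  refine tendsto_integral_filter_of_dominated_convergence (fun _ ↦ ‖f‖)
    (.of_forall fun _ ↦ by fun_prop) (.of_forall fun _ ↦ .of_forall fun _ ↦ f.norm_coe_le_norm _)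
    (integrable_const _) (.of_forall fun x ↦ ?_)
  have hsqrt : Tendsto (fun i ↦ √(w i : ℝ)) l (𝓝 √(w₀ : ℝ)) :=
    (NNReal.tendsto_coe.mpr hw).sqrt
  exact (f.continuous.tendsto _).comp (hm.add (hsqrt.mul_const x))

lemma sum_Icc_sq_affine (z₀ b : ℝ) (T : ℕ) :
    ∑ t ∈ Finset.Icc 1 T, (z₀ + b * t) ^ 2 =
      T * z₀ ^ 2 + z₀ * b * T * (T + 1) + b ^ 2 * (T * (T + 1) * (2 * T + 1)) / 6 := by
  induction T with
  | zero => simp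
  | succ n ih =>
    rw [Finset.sum_Icc_succ_top (by omega), ih]
    push_cast
    ring

lemma tendsto_sum_Icc_sq_affine_div_cube (z₀ b : ℝ) :
    Tendsto (fun T : ℕ ↦ (∑ t ∈ Finset.Icc 1 T, (z₀ + b * t) ^ 2) / (T : ℝ) ^ 3) atTop
      (𝓝 (b ^ 2 / 3)) := by
  -- `g (1 / T)` is the closed form of `sum_Icc_sq_affine` divided by `T ^ 3`
  let g : ℝ → ℝ := fun x ↦ z₀ ^ 2 * x ^ 2 + z₀ * b * (1 + x) * x + b ^ 2 * ((1 + x) * (2 + x)) / 6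
  have hg : Tendsto g (𝓝 0) (𝓝 (b ^ 2 / 3)) := by
    convert (show Continuous g by fun_prop).tendsto 0 using 2
    simp only [g]
    ring
  refine (hg.comp tendsto_one_div_atTop_nhds_zero_nat).congr' ?_
  filter_upwards [eventually_ne_atTop 0] with T hT
  have hT' : (T : ℝ) ≠ 0 := by exact_mod_cast hT
  simp only [Function.comp_apply, g, sum_Icc_sq_affine]
  field_simp

lemma tendsto_rpow_three_halves_sq_div_sum_Icc_sq_affine (z₀ : ℝ) {b : ℝ} (hb : b ≠ 0) :
    Tendsto (fun T : ℕ ↦ ((T : ℝ) ^ ((3 : ℝ) / 2)) ^ 2 / ∑ t ∈ Finset.Icc 1 T, (z₀ + b * t) ^ 2)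
      atTop (𝓝 (3 / b ^ 2)) := by
  have hrate (T : ℕ) : ((T : ℝ) ^ ((3 : ℝ) / 2)) ^ 2 = (T : ℝ) ^ 3 := by
    rw [← Real.rpow_mul_natCast (Nat.cast_nonneg _)]
    norm_num
  convert (tendsto_sum_Icc_sq_affine_div_cube z₀ b).inv₀ (by positivity) using 2 with T
  · rw [inv_div, hrate]
  · rw [inv_div]

lemma mul_lsq_error_eq_sum_mul {ι : Type*} (α c : ℝ) (z u y : ι → ℝ)
    (hy : ∀ t, y t = α * z t + u t) (s : Finset ι) (hs : ∑ t ∈ s, z t ^ 2 ≠ 0) :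
    c * ((∑ t ∈ s, z t * y t) / (∑ t ∈ s, z t ^ 2) - α) =
      ∑ t ∈ s, c * z t / (∑ t ∈ s, z t ^ 2) * u t := by
  have hsum : ∑ t ∈ s, z t * y t = α * ∑ t ∈ s, z t ^ 2 + ∑ t ∈ s, z t * u t := by
    simp only [hy, Finset.mul_sum, ← Finset.sum_add_distrib]
    exact Finset.sum_congr rfl fun t _ ↦ by ring
  rw [hsum, add_div, mul_div_cancel_right₀ α hs, add_sub_cancel_left, Finset.sum_div,
    Finset.mul_sum]
  exact Finset.sum_congr rfl fun t _ ↦ by ring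

lemma map_mul_lsq_error_eq_gaussianReal {ι Ω : Type*} [MeasurableSpace Ω] {P : Measure Ω}
    [IsProbabilityMeasure P] {u : ι → Ω → ℝ} (hindep : iIndepFun u P) {v : ℝ≥0}
    (hlaw : ∀ t, P.map (u t) = gaussianReal 0 v) (α c : ℝ) (z : ι → ℝ) {y : ι → Ω → ℝ}
    (hy : ∀ t ω, y t ω = α * z t + u t ω) (s : Finset ι) (hs : ∑ t ∈ s, z t ^ 2 ≠ 0) :
    P.map (fun ω ↦ c * ((∑ t ∈ s, z t * y t ω) / (∑ t ∈ s, z t ^ 2) - α)) =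
      gaussianReal 0 ((c ^ 2 / ∑ t ∈ s, z t ^ 2).toNNReal * v) := by
  simp only [mul_lsq_error_eq_sum_mul α c z (u · _) (y · _) (hy · _) s hs,
    map_sum_mul_eq_gaussianReal hindep hlaw, mul_zero, Finset.sum_const_zero]
  congr 1
  ext
  have hpos : 0 ≤ c ^ 2 / ∑ t ∈ s, z t ^ 2 :=
    div_nonneg (sq_nonneg c) (Finset.sum_nonneg fun _ _ ↦ sq_nonneg _)
  simp only [NNReal.coe_sum, NNReal.coe_mul, NNReal.coe_mk, Real.coe_toNNReal _ hpos, div_pow,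
    mul_pow, ← Finset.sum_mul, ← Finset.sum_div, ← Finset.mul_sum]
  field_simp

theorem regression_estimator_asymptotically_gaussian_general
    {Ω : Type*} [MeasurableSpace Ω] (P : Measure Ω) [IsProbabilityMeasure P]
    (α b z₀ : ℝ) (hb : b ≠ 0)
    (v : ℝ≥0)
    (u : ℕ → Ω → ℝ)
    (hu_indep : iIndepFun u P)
    (hu_gauss : ∀ t, Measure.map (u t) P = gaussianReal 0 v)
    (y : ℕ → Ω → ℝ) (hy : ∀ t ω, y t ω = α * (z₀ + b * t) + u t ω) :
    ∀ f : BoundedContinuousFunction ℝ ℝ,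
      Tendsto
        (fun T : ℕ =>
          ∫ ω, f ((T : ℝ) ^ ((3 : ℝ) / 2) *
            ((∑ t ∈ Finset.Icc 1 T, (z₀ + b * t) * y t ω) /
              (∑ t ∈ Finset.Icc 1 T, (z₀ + b * t) ^ 2) - α)) ∂P)
        atTop
        (𝓝 (∫ x, f x ∂(gaussianReal 0 (3 * v / (b ^ 2).toNNReal)))) := by
  intro f
  have hrate := tendsto_rpow_three_halves_sq_div_sum_Icc_sq_affine z₀ hb
  have hdesign_ne : ∀ᶠ T : ℕ in atTop, ∑ t ∈ Finset.Icc 1 T, (z₀ + b * t) ^ 2 ≠ 0 :=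
    (hrate.eventually_ne (by positivity)).mono fun T h ↦ (div_ne_zero_iff.mp h).2
  have hlimit : (3 / b ^ 2).toNNReal * v = 3 * v / (b ^ 2).toNNReal := by
    apply NNReal.eq
    simp only [NNReal.coe_div, NNReal.coe_mul, Real.coe_toNNReal _ (sq_nonneg b),
      Real.coe_toNNReal _ (div_nonneg zero_le_three (sq_nonneg b))]
    push_cast
    ring
  have hvar := ((continuous_real_toNNReal.tendsto _).comp hrate).mul_const v
  rw [hlimit] at hvar
  refine (tendsto_integral_gaussianReal tendsto_const_nhds hvar f).congr' ?_
  filter_upwards [hdesign_ne] with T hT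
  have herr := map_mul_lsq_error_eq_gaussianReal hu_indep hu_gauss α ((T : ℝ) ^ ((3 : ℝ) / 2))
    (fun t : ℕ ↦ z₀ + b * t) hy _ hT
  rw [Function.comp_apply, ← herr,
    integral_map (.of_map_ne_zero (by rw [herr]; exact NeZero.ne _))
      f.continuous.aestronglyMeasurable]

/-- Asymptotic normality of the regression-based estimator at rate `T^(3/2)`: in the model
`y t = α * z t + u t` with deterministic trend `z t = z₀ + b * t`, `b ≠ 0`, and `(u t)`
i.i.d. `N(0, v)` with `v > 0`, the least-squares estimator
`α̂₂ = (∑_{t=1}^T z t ^ 2)⁻¹ ∑_{t=1}^T z t * y t` satisfies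
`T^(3/2) * (α̂₂ - α) → N(0, 3 v / b²)` in distribution (weak convergence tested against
bounded continuous functions). -/
theorem regression_estimator_asymptotically_gaussian
    {Ω : Type*} [MeasurableSpace Ω] (P : Measure Ω) [IsProbabilityMeasure P]
    (α b z₀ : ℝ) (hb : b ≠ 0)
    (v : ℝ≥0) (hv : 0 < v)
    (u : ℕ → Ω → ℝ)
    (hu_meas : ∀ t, Measurable (u t))
    (hu_indep : iIndepFun u P)
    (hu_gauss : ∀ t, Measure.map (u t) P = gaussianReal 0 v)
    (y : ℕ → Ω → ℝ) (hy : ∀ t ω, y t ω = α * (z₀ + b * t) + u t ω) :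
    ∀ f : BoundedContinuousFunction ℝ ℝ,
      Tendsto
        (fun T : ℕ =>
          ∫ ω, f ((T : ℝ) ^ ((3 : ℝ) / 2) *
            ((∑ t ∈ Finset.Icc 1 T, (z₀ + b * t) * y t ω) /
              (∑ t ∈ Finset.Icc 1 T, (z₀ + b * t) ^ 2) - α)) ∂P)
        atTop
        (𝓝 (∫ x, f x ∂(gaussianReal 0 (3 * v / (b ^ 2).toNNReal)))) :=
  regression_estimator_asymptotically_gaussian_general P α b z₀ hb v u hu_indep hu_gauss y hy
end
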